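/- For all A, B ∈ SL(2,ℂ) with A ≠ ±1 and B ≠ ±1, setting s = 2·max{‖A‖², ‖B‖²}, one has |tr B|² ≤ s − 4·|γ(A,B)|/(s − |tr A|²). (Here s − |tr A|² ≥ ‖A − A⁻¹‖²/2 > 0, so the right-hand side is well defined.) -/

import Mathlib

open Matrix Real

noncomputable section

abbrev SL2C := Matrix.SpecialLinearGroup (Fin 2) ℂ

/-- The Frobenius (Hilbert–Schmidt) norm of a 2×2 complex matrix. -/
def fnorm (A : Matrix (Fin 2) (Fin 2) ℂ) : ℝ :=
  @norm _ Matrix.frobeniusSeminormedAddCommGroup.toNorm A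

instance : TopologicalSpace SL2C :=
  TopologicalSpace.induced (fun g => (g : Matrix (Fin 2) (Fin 2) ℂ)) inferInstance

/-- A subgroup of `SL(2,ℂ)` is discrete if it is a discrete subspace of `SL(2,ℂ)`. -/
def IsDiscreteSubgroup (Γ : Subgroup SL2C) : Prop := DiscreteTopology Γ

/-- `A` is elliptic of order `n`: `A^n = ±1` but `A^k ≠ ±1` for `1 ≤ k < n`. -/
def IsEllipticOfOrder (A : SL2C) (n : ℕ) : Prop :=
  (A ^ n = 1 ∨ A ^ n = -1) ∧ ∀ k : ℕ, 1 ≤ k → k < n → A ^ k ≠ 1 ∧ A ^ k ≠ -1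

/-- `A` is parabolic: `A ≠ ±1` and `tr A = ±2`. -/
def IsParabolic (A : SL2C) : Prop :=
  A ≠ 1 ∧ A ≠ -1 ∧ (Matrix.trace (A : Matrix (Fin 2) (Fin 2) ℂ) = 2 ∨
    Matrix.trace (A : Matrix (Fin 2) (Fin 2) ℂ) = -2)

/-- `S` and `T` have a common eigenvector in `ℂ²`. -/
def HasCommonEigenvector (S T : SL2C) : Prop :=
  ∃ v : Fin 2 → ℂ, v ≠ 0 ∧ (∃ a : ℂ, (S : Matrix (Fin 2) (Fin 2) ℂ).mulVec v = a • v) ∧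
    (∃ b : ℂ, (T : Matrix (Fin 2) (Fin 2) ℂ).mulVec v = b • v)

/-- A subgroup of `SL(2,ℂ)` is nonelementary if it contains two elements `S`, `T`
with `S^k ≠ ±1 ≠ T^k` for all `k ≥ 1` having no common eigenvector in `ℂ²`. -/
def IsNonelementary (Γ : Subgroup SL2C) : Prop :=
  ∃ S ∈ Γ, ∃ T ∈ Γ, (∀ k : ℕ, 1 ≤ k → S ^ k ≠ 1 ∧ S ^ k ≠ -1) ∧
    (∀ k : ℕ, 1 ≤ k → T ^ k ≠ 1 ∧ T ^ k ≠ -1) ∧ ¬ HasCommonEigenvector S T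

/-- The trace parameter `β(A) = tr²(A) - 4`. -/
def βp (A : SL2C) : ℂ := (Matrix.trace (A : Matrix (Fin 2) (Fin 2) ℂ)) ^ 2 - 4

/-- The commutator parameter `γ(A,B) = tr [A,B] - 2`. -/
def γp (A B : SL2C) : ℂ :=
  Matrix.trace ((A * B * A⁻¹ * B⁻¹ : SL2C) : Matrix (Fin 2) (Fin 2) ℂ) - 2

/-- `PSL(2,ℂ)`, the quotient of `SL(2,ℂ)` by its center `{1, -1}`. -/
abbrev PSL2C := SL2C ⧸ Subgroup.center SL2C

/-- The image in `PSL(2,ℂ)` of a subgroup of `SL(2,ℂ)`. -/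
def pslImage (Γ : Subgroup SL2C) : Subgroup PSL2C :=
  Γ.map (QuotientGroup.mk' (Subgroup.center SL2C))

open Classical in
/-- `t5`: the unique real `t > 1` with
`t (t - cos²(π/5)) + (t-1) √((t+1)(t+1-2 cos²(π/5))) = 1/2`. -/
def t5 : ℝ :=
  if h : ∃ t : ℝ, 1 < t ∧
      t * (t - Real.cos (π / 5) ^ 2) +
        (t - 1) * Real.sqrt ((t + 1) * (t + 1 - 2 * Real.cos (π / 5) ^ 2)) = 1 / 2
  then h.choose else 0

/-- The value `t n = cosh (c n)` where `c n` is the sharp displacement bound for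
discrete nonelementary groups with an elliptic generator of order `n ≥ 3`. -/
def tOf : ℕ → ℝ
  | 3 => (2 * Real.sqrt (8 + 2 * Real.sqrt 5) - (1 + Real.sqrt 5)) / (6 - Real.sqrt 5)
  | 4 => (Real.sqrt (6 + 2 * Real.sqrt 3) - Real.sqrt 3) / (3 - Real.sqrt 3)
  | 5 => t5
  | 6 => 17 / 16
  | n => (5 - 2 * Real.sin (π / n) ^ 2) / (4 + 2 * Real.sin (π / n) ^ 2)

/-! Put `X = A - A⁻¹ = 2A - (tr A)·1` and `Y = B - B⁻¹`. Then `16 γ(A,B) = (tr XY)² - tr X² tr Y²`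
and `‖X‖² = 2 (2‖A‖² - |tr A|²)`. Identifying a traceless `[[p, q], [r, -p]]` with `(√2 p, q, r) ∈ ℂ³`,
the Lagrange identity for the Hermitian product bounds `|(tr XY)² - tr X² tr Y²|` by `‖X‖² ‖Y‖²`, so
`4 |γ(A,B)| ≤ (2‖A‖² - |tr A|²)(2‖B‖² - |tr B|²)`. Both factors are positive because `A, B ≠ ±1`
(only `±1` equal their own inverse), and each is at most `s - |tr|²`. -/

open Complex ComplexConjugate

local notation "M₂" => Matrix (Fin 2) (Fin 2) ℂ

lemma normSq_lagrange_identity (p q r p' q' r' : ℂ) :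
    (2 * normSq p + normSq q + normSq r) * (2 * normSq p' + normSq q' + normSq r') =
      normSq (2 * p * conj p' + q * conj q' + r * conj r') + 2 * normSq (p * q' - q * p') +
        2 * normSq (p * r' - r * p') + normSq (q * r' - r * q') := by
  simp only [normSq_apply, mul_re, mul_im, sub_re, sub_im, add_re, add_im, conj_re, conj_im,
    re_ofNat, im_ofNat]
  ring

lemma norm_sq_sub_four_mul_mul_le (a b c : ℂ) :
    ‖a ^ 2 - 4 * b * c‖ ≤ normSq a + 2 * normSq b + 2 * normSq c := by
  have amgm := two_mul_le_add_sq ‖b‖ ‖c‖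
  calc ‖a ^ 2 - 4 * b * c‖ ≤ ‖a‖ ^ 2 + 4 * (‖b‖ * ‖c‖) := by
        refine (norm_sub_le _ _).trans_eq ?_
        rw [norm_pow, norm_mul, norm_mul, RCLike.norm_ofNat, mul_assoc]
    _ ≤ normSq a + 2 * normSq b + 2 * normSq c := by
        simp only [← Complex.sq_norm]; linarith

lemma fnorm_sq (M : M₂) : fnorm M ^ 2 = ∑ i, ∑ j, ‖M i j‖ ^ 2 := by
  have h : fnorm M = (∑ i, ∑ j, ‖M i j‖ ^ (2 : ℝ)) ^ (1 / 2 : ℝ) := frobenius_norm_def M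
  rw [h, ← Real.sqrt_eq_rpow, Real.sq_sqrt (by positivity)]
  simp only [Real.rpow_two]

lemma fnorm_pos {M : M₂} (hM : M ≠ 0) : 0 < fnorm M :=
  letI := Matrix.frobeniusNormedAddCommGroup (m := Fin 2) (n := Fin 2) (α := ℂ)
  norm_pos_iff.mpr hM

lemma fnorm_sq_of_trace_eq_zero {X : M₂} (hX : trace X = 0) :
    fnorm X ^ 2 = 2 * normSq (X 0 0) + normSq (X 0 1) + normSq (X 1 0) := by
  have h11 : X 1 1 = -X 0 0 := by rw [trace_fin_two] at hX; linear_combination hX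
  simp only [fnorm_sq, Fin.sum_univ_two, h11, Complex.sq_norm, normSq_neg]
  ring

lemma fnorm_sub_adjugate_sq (M : M₂) :
    fnorm (M - adjugate M) ^ 2 = 2 * (2 * fnorm M ^ 2 - ‖trace M‖ ^ 2) := by
  simp only [fnorm_sq, Fin.sum_univ_two, adjugate_fin_two, trace_fin_two, Matrix.sub_apply,
    of_apply, cons_val', cons_val_zero, cons_val_one, empty_val', cons_val_fin_one,
    Complex.sq_norm, normSq_apply, sub_re, sub_im, add_re, add_im, neg_re, neg_im]
  ring

lemma trace_sub_adjugate (M : M₂) : trace (M - adjugate M) = 0 := by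
  simp only [adjugate_fin_two, trace_fin_two, Matrix.sub_apply, of_apply, cons_val',
    cons_val_zero, cons_val_one, empty_val', cons_val_fin_one]
  ring

lemma norm_trace_mul_sq_sub_le {X Y : M₂} (hX : trace X = 0) (hY : trace Y = 0) :
    ‖trace (X * Y) ^ 2 - trace (X * X) * trace (Y * Y)‖ ≤ fnorm X ^ 2 * fnorm Y ^ 2 := by
  have hX11 : X 1 1 = -X 0 0 := by rw [trace_fin_two] at hX; linear_combination hX
  have hY11 : Y 1 1 = -Y 0 0 := by rw [trace_fin_two] at hY; linear_combination hY
  have h_expand : trace (X * Y) ^ 2 - trace (X * X) * trace (Y * Y) =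
      (X 0 1 * Y 1 0 - X 1 0 * Y 0 1) ^ 2 -
        4 * (X 0 0 * Y 0 1 - X 0 1 * Y 0 0) * (X 0 0 * Y 1 0 - X 1 0 * Y 0 0) := by
    simp only [trace_fin_two, mul_apply, Fin.sum_univ_two, hX11, hY11]
    ring
  rw [h_expand, fnorm_sq_of_trace_eq_zero hX, fnorm_sq_of_trace_eq_zero hY,
    normSq_lagrange_identity]
  refine (norm_sq_sub_four_mul_mul_le _ _ _).trans ?_
  linarith [normSq_nonneg (2 * X 0 0 * conj (Y 0 0) + X 0 1 * conj (Y 0 1) + X 1 0 * conj (Y 1 0))]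

lemma sixteen_mul_γp (A B : SL2C) :
    16 * γp A B = trace (((A : M₂) - adjugate A) * ((B : M₂) - adjugate B)) ^ 2 -
      trace (((A : M₂) - adjugate A) * ((A : M₂) - adjugate A)) *
        trace (((B : M₂) - adjugate B) * ((B : M₂) - adjugate B)) := by
  have hA := A.2
  have hB := B.2
  rw [det_fin_two] at hA hB
  simp only [γp, Matrix.SpecialLinearGroup.coe_mul, Matrix.SpecialLinearGroup.coe_inv,
    adjugate_fin_two, trace_fin_two, mul_apply, Matrix.sub_apply, Fin.sum_univ_two, of_apply,
    cons_val', cons_val_zero, cons_val_one, empty_val', cons_val_fin_one]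
  linear_combination 32 * (B 0 0 * B 1 1 - B 0 1 * B 1 0) * hA + 32 * hB

lemma eq_one_or_eq_neg_one_of_inv_eq {K : Type*} [Field K] [CharZero K]
    (A : SpecialLinearGroup (Fin 2) K) (h : A⁻¹ = A) : A = 1 ∨ A = -1 := by
  have hdet := A.2
  rw [det_fin_two] at hdet
  have hadj : adjugate (A : Matrix (Fin 2) (Fin 2) K) = A := by
    rw [← Matrix.SpecialLinearGroup.coe_inv, h]
  rw [adjugate_fin_two] at hadj
  have e00 := congrFun (congrFun hadj 0) 0
  have e01 := congrFun (congrFun hadj 0) 1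
  have e10 := congrFun (congrFun hadj 1) 0
  simp only [of_apply, cons_val', cons_val_zero, cons_val_one, empty_val', cons_val_fin_one]
    at e00 e01 e10
  have hb : A 0 1 = 0 := by linear_combination (-1 / 2 : K) * e01
  have hc : A 1 0 = 0 := by linear_combination (-1 / 2 : K) * e10
  have ha : A 0 0 * A 0 0 = 1 := by rw [hb, hc, e00] at hdet; linear_combination hdet
  rcases mul_self_eq_one_iff.mp ha with ha | ha
  · left
    ext i j
    fin_cases i <;> fin_cases j <;> simp [ha, hb, hc, e00]
  · right
    ext i j
    fin_cases i <;> fin_cases j <;> simp [ha, hb, hc, e00]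

lemma two_mul_fnorm_sq_sub_norm_trace_sq_pos {A : SL2C} (h1 : A ≠ 1) (h2 : A ≠ -1) :
    0 < 2 * fnorm A ^ 2 - ‖trace (A : M₂)‖ ^ 2 := by
  have hX : (A : M₂) - adjugate A ≠ 0 := fun h ↦ by
    refine (eq_one_or_eq_neg_one_of_inv_eq A (Subtype.ext ?_)).elim h1 h2
    rw [Matrix.SpecialLinearGroup.coe_inv]
    exact (sub_eq_zero.mp h).symm
  have := fnorm_sub_adjugate_sq A ▸ pow_pos (fnorm_pos hX) 2
  linarith

lemma four_mul_norm_γp_le (A B : SL2C) :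
    4 * ‖γp A B‖ ≤
      (2 * fnorm A ^ 2 - ‖trace (A : M₂)‖ ^ 2) * (2 * fnorm B ^ 2 - ‖trace (B : M₂)‖ ^ 2) := by
  have h := norm_trace_mul_sq_sub_le (trace_sub_adjugate (A : M₂)) (trace_sub_adjugate (B : M₂))
  rw [← sixteen_mul_γp, norm_mul, fnorm_sub_adjugate_sq, fnorm_sub_adjugate_sq] at h
  norm_num at h
  linarith

/-- Lemma 2.19: `|tr B|² ≤ s - 4|γ(A,B)|/(s - |tr A|²)` where `s = 2 max{‖A‖², ‖B‖²}`. -/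
theorem trace_upper_bound (A B : SL2C)
    (hA1 : A ≠ 1) (hA2 : A ≠ -1) (hB1 : B ≠ 1) (hB2 : B ≠ -1) :
    ‖Matrix.trace (B : Matrix (Fin 2) (Fin 2) ℂ)‖ ^ 2 ≤
      2 * max (fnorm (A : Matrix (Fin 2) (Fin 2) ℂ) ^ 2)
          (fnorm (B : Matrix (Fin 2) (Fin 2) ℂ) ^ 2) -
        4 * ‖γp A B‖ /
          (2 * max (fnorm (A : Matrix (Fin 2) (Fin 2) ℂ) ^ 2)
              (fnorm (B : Matrix (Fin 2) (Fin 2) ℂ) ^ 2) -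
            ‖Matrix.trace (A : Matrix (Fin 2) (Fin 2) ℂ)‖ ^ 2) := by
  set s := 2 * max (fnorm (A : M₂) ^ 2) (fnorm (B : M₂) ^ 2)
  have hA := two_mul_fnorm_sq_sub_norm_trace_sq_pos hA1 hA2
  have hB := two_mul_fnorm_sq_sub_norm_trace_sq_pos hB1 hB2
  have hsA : 2 * fnorm A ^ 2 ≤ s := by simp [s]
  have hsB : 2 * fnorm B ^ 2 ≤ s := by simp [s]
  rw [le_sub_comm, div_le_iff₀ (by linarith)]
  calc 4 * ‖γp A B‖
      ≤ (2 * fnorm A ^ 2 - ‖trace (A : M₂)‖ ^ 2) * (2 * fnorm B ^ 2 - ‖trace (B : M₂)‖ ^ 2) :=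
        four_mul_norm_γp_le A B
    _ ≤ (s - ‖trace (A : M₂)‖ ^ 2) * (s - ‖trace (B : M₂)‖ ^ 2) := by gcongr; linarith
    _ = (s - ‖trace (B : M₂)‖ ^ 2) * (s - ‖trace (A : M₂)‖ ^ 2) := mul_comm _ _

end
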